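/- arXiv:1811.05806 — 4 statements merged into one kernel-verified Lean document; each statement's English description precedes it below -/
import Mathlib

section
/- For all natural numbers k and ℓ, the element (X₁^k·Y₁^ℓ + X₂^k·Y₂^ℓ)/2 of the rational function field ℂ(X₁,Y₁,X₂,Y₂) lies in the subring generated by u₂, u₄, u₅, u₇ (that is, in the smallest subring of the field containing these four elements). -/
/- Context: K = ℂ(X₁,Y₁,X₂,Y₂), the fraction field of the polynomial ring in four
variables; u₂ = (X₁+X₂)/2, u₄ = (X₁−X₂)²/4, u₅ = (Y₁−Y₂)/(X₁−X₂), u₇ = (Y₁+Y₂)/2. -/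

set_option maxHeartbeats 1000000
set_option synthInstance.maxHeartbeats 1000000

noncomputable section

abbrev K : Type := FractionRing (MvPolynomial (Fin 4) ℂ)

def X1 : K := algebraMap (MvPolynomial (Fin 4) ℂ) K (MvPolynomial.X 0)
def Y1 : K := algebraMap (MvPolynomial (Fin 4) ℂ) K (MvPolynomial.X 1)
def X2 : K := algebraMap (MvPolynomial (Fin 4) ℂ) K (MvPolynomial.X 2)
def Y2 : K := algebraMap (MvPolynomial (Fin 4) ℂ) K (MvPolynomial.X 3)

def u2 : K := (X1 + X2) / 2
def u4 : K := (X1 - X2) ^ 2 / 4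
def u5 : K := (Y1 - Y2) / (X1 - X2)
def u7 : K := (Y1 + Y2) / 2

lemma hs : X1 - X2 ≠ 0 := by
  have h : (MvPolynomial.X 0 - MvPolynomial.X 2 : MvPolynomial (Fin 4) ℂ) ≠ 0 := by
    rw [sub_ne_zero]
    intro h
    have := MvPolynomial.X_injective h
    simp at this
  have : X1 - X2 = algebraMap (MvPolynomial (Fin 4) ℂ) K
      (MvPolynomial.X 0 - MvPolynomial.X 2) := by
    rw [map_sub]; rfl
  rw [this]
  intro hc
  exact h ((IsFractionRing.injective (MvPolynomial (Fin 4) ℂ) K) (by simpa using hc))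


/-- For all natural numbers `k` and `ℓ`, the element `(X₁^k·Y₁^ℓ + X₂^k·Y₂^ℓ)/2`
of `ℂ(X₁,Y₁,X₂,Y₂)` lies in the subring generated by `u₂, u₄, u₅, u₇`. -/
theorem statement0 (k l : ℕ) :
    (X1 ^ k * Y1 ^ l + X2 ^ k * Y2 ^ l) / 2 ∈
      Subring.closure ({u2, u4, u5, u7} : Set K) := by
  set R := Subring.closure ({u2, u4, u5, u7} : Set K) with hR
  have h2 : u2 ∈ R := Subring.subset_closure (by simp)
  have h4 : u4 ∈ R := Subring.subset_closure (by simp)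
  have h5 : u5 ∈ R := Subring.subset_closure (by simp)
  have h7 : u7 ∈ R := Subring.subset_closure (by simp)
  have key : ∀ k l : ℕ, (X1 ^ k * Y1 ^ l + X2 ^ k * Y2 ^ l) / 2 ∈ R ∧
      (X1 ^ k * Y1 ^ l - X2 ^ k * Y2 ^ l) / (X1 - X2) ∈ R := by
    intro k
    induction k with
    | zero =>
      intro l
      induction l with
      | zero =>
        constructor
        · norm_num
        · norm_num
      | succ l ih =>
        obtain ⟨hp, hq⟩ := ih
        constructor
        · have e : (X1 ^ 0 * Y1 ^ (l+1) + X2 ^ 0 * Y2 ^ (l+1)) / 2 =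
              u7 * ((X1 ^ 0 * Y1 ^ l + X2 ^ 0 * Y2 ^ l) / 2)
              + (u4 * u5) * ((X1 ^ 0 * Y1 ^ l - X2 ^ 0 * Y2 ^ l) / (X1 - X2)) := by
            unfold u4 u5 u7
            field_simp [hs]
            ring
          rw [e]
          exact R.add_mem (R.mul_mem h7 hp) (R.mul_mem (R.mul_mem h4 h5) hq)
        · have e : (X1 ^ 0 * Y1 ^ (l+1) - X2 ^ 0 * Y2 ^ (l+1)) / (X1 - X2) =
              u5 * ((X1 ^ 0 * Y1 ^ l + X2 ^ 0 * Y2 ^ l) / 2)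
              + u7 * ((X1 ^ 0 * Y1 ^ l - X2 ^ 0 * Y2 ^ l) / (X1 - X2)) := by
            unfold u5 u7
            field_simp [hs]
            ring
          rw [e]
          exact R.add_mem (R.mul_mem h5 hp) (R.mul_mem h7 hq)
    | succ k ih =>
      intro l
      obtain ⟨hp, hq⟩ := ih l
      constructor
      · have e : (X1 ^ (k+1) * Y1 ^ l + X2 ^ (k+1) * Y2 ^ l) / 2 =
            u2 * ((X1 ^ k * Y1 ^ l + X2 ^ k * Y2 ^ l) / 2)
            + u4 * ((X1 ^ k * Y1 ^ l - X2 ^ k * Y2 ^ l) / (X1 - X2)) := by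
          unfold u2 u4
          field_simp [hs]
          ring
        rw [e]
        exact R.add_mem (R.mul_mem h2 hp) (R.mul_mem h4 hq)
      · have e : (X1 ^ (k+1) * Y1 ^ l - X2 ^ (k+1) * Y2 ^ l) / (X1 - X2) =
            (X1 ^ k * Y1 ^ l + X2 ^ k * Y2 ^ l) / 2
            + u2 * ((X1 ^ k * Y1 ^ l - X2 ^ k * Y2 ^ l) / (X1 - X2)) := by
          unfold u2
          field_simp [hs]
          ring
        rw [e]
        exact R.add_mem hp (R.mul_mem h2 hq)
  exact (key k l).1

end
end

section
/- For all natural numbers k and ℓ, the element (X₁^k·Y₂^ℓ + X₂^k·Y₁^ℓ)/2 of the rational function field ℂ(X₁,Y₁,X₂,Y₂) lies in the subring generated by u₂, u₄, u₅, u₇ (that is, in the smallest subring of the field containing these four elements). -/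
/- Context: K = ℂ(X₁,Y₁,X₂,Y₂), the fraction field of the polynomial ring in four
variables; u₂ = (X₁+X₂)/2, u₄ = (X₁−X₂)²/4, u₅ = (Y₁−Y₂)/(X₁−X₂), u₇ = (Y₁+Y₂)/2. -/

noncomputable section

theorem gen_aux {F : Type*} [Field F] (x1 y1 x2 y2 : F) (hd : x1 - x2 ≠ 0)
    (h2 : (2 : F) ≠ 0) (k l : ℕ) :
    (x1 ^ k * y2 ^ l + x2 ^ k * y1 ^ l) / 2 ∈
      Subring.closure ({(x1 + x2) / 2, (x1 - x2) ^ 2 / 4, (y1 - y2) / (x1 - x2),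
        (y1 + y2) / 2} : Set F) := by
  have h4 : (4 : F) ≠ 0 := by
    intro h
    exact h2 (by
      have : (2 : F) * 2 = 0 := by rw [show (2:F)*2 = 4 by norm_num, h]
      rcases mul_eq_zero.mp this with h' | h' <;> exact h')
  set v2 : F := (x1 + x2) / 2 with hv2
  set v4 : F := (x1 - x2) ^ 2 / 4 with hv4
  set v5 : F := (y1 - y2) / (x1 - x2) with hv5
  set v7 : F := (y1 + y2) / 2 with hv7
  set S := Subring.closure ({v2, v4, v5, v7} : Set F) with hS
  have hu2 : v2 ∈ S := Subring.subset_closure (by simp)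
  have hu4 : v4 ∈ S := Subring.subset_closure (by simp)
  have hu5 : v5 ∈ S := Subring.subset_closure (by simp)
  have hu7 : v7 ∈ S := Subring.subset_closure (by simp)
  suffices h : ∀ k l : ℕ, (x1 ^ k * y2 ^ l + x2 ^ k * y1 ^ l) / 2 ∈ S ∧
      (x1 ^ k * y2 ^ l - x2 ^ k * y1 ^ l) / (x1 - x2) ∈ S from (h k l).1
  intro k
  induction k with
  | zero =>
    intro l
    induction l with
    | zero =>
      constructor
      · have h : (x1 ^ 0 * y2 ^ 0 + x2 ^ 0 * y1 ^ 0) / 2 = 1 := by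
          field_simp
          norm_num
        rw [h]; exact S.one_mem
      · have h : (x1 ^ 0 * y2 ^ 0 - x2 ^ 0 * y1 ^ 0) / (x1 - x2) = 0 := by
          simp
        rw [h]; exact S.zero_mem
    | succ n ih =>
      obtain ⟨hs, ht⟩ := ih
      constructor
      · have h : (x1 ^ 0 * y2 ^ (n + 1) + x2 ^ 0 * y1 ^ (n + 1)) / 2 =
            v7 * ((x1 ^ 0 * y2 ^ n + x2 ^ 0 * y1 ^ n) / 2) -
              (v4 * v5) * ((x1 ^ 0 * y2 ^ n - x2 ^ 0 * y1 ^ n) / (x1 - x2)) := by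
          rw [hv4, hv5, hv7]; field_simp; ring
        rw [h]
        exact S.sub_mem (S.mul_mem hu7 hs) (S.mul_mem (S.mul_mem hu4 hu5) ht)
      · have h : (x1 ^ 0 * y2 ^ (n + 1) - x2 ^ 0 * y1 ^ (n + 1)) / (x1 - x2) =
            v7 * ((x1 ^ 0 * y2 ^ n - x2 ^ 0 * y1 ^ n) / (x1 - x2)) -
              v5 * ((x1 ^ 0 * y2 ^ n + x2 ^ 0 * y1 ^ n) / 2) := by
          rw [hv5, hv7]; field_simp; ring
        rw [h]
        exact S.sub_mem (S.mul_mem hu7 ht) (S.mul_mem hu5 hs)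
  | succ m ih =>
    intro l
    obtain ⟨hs, ht⟩ := ih l
    constructor
    · have h : (x1 ^ (m + 1) * y2 ^ l + x2 ^ (m + 1) * y1 ^ l) / 2 =
          v2 * ((x1 ^ m * y2 ^ l + x2 ^ m * y1 ^ l) / 2) +
            v4 * ((x1 ^ m * y2 ^ l - x2 ^ m * y1 ^ l) / (x1 - x2)) := by
        rw [hv2, hv4]; field_simp; ring
      rw [h]
      exact S.add_mem (S.mul_mem hu2 hs) (S.mul_mem hu4 ht)
    · have h : (x1 ^ (m + 1) * y2 ^ l - x2 ^ (m + 1) * y1 ^ l) / (x1 - x2) =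
          v2 * ((x1 ^ m * y2 ^ l - x2 ^ m * y1 ^ l) / (x1 - x2)) +
            (x1 ^ m * y2 ^ l + x2 ^ m * y1 ^ l) / 2 := by
        rw [hv2]; field_simp; ring
      rw [h]
      exact S.add_mem (S.mul_mem hu2 ht) hs

/-- For all natural numbers `k` and `ℓ`, the element `(X₁^k·Y₂^ℓ + X₂^k·Y₁^ℓ)/2`
of `ℂ(X₁,Y₁,X₂,Y₂)` lies in the subring generated by `u₂, u₄, u₅, u₇`. -/
theorem statement1 (k l : ℕ) :
    (X1 ^ k * Y2 ^ l + X2 ^ k * Y1 ^ l) / 2 ∈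
      Subring.closure ({u2, u4, u5, u7} : Set K) := by
  have hinj := IsFractionRing.injective (MvPolynomial (Fin 4) ℂ) K
  have hd : X1 - X2 ≠ 0 := by
    have hx : (MvPolynomial.X 0 : MvPolynomial (Fin 4) ℂ) ≠ MvPolynomial.X 2 := by
      intro h
      have := MvPolynomial.X_injective h
      simp at this
    exact sub_ne_zero.mpr (hinj.ne hx)
  have h2 : (2 : K) ≠ 0 := by
    have h' : algebraMap (MvPolynomial (Fin 4) ℂ) K 2 ≠ 0 := by
      rw [Ne, map_eq_zero_iff _ hinj]
      norm_num
    simpa using h'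
  simpa only [u2, u4, u5, u7] using gen_aux X1 Y1 X2 Y2 hd h2 k l


end
end

section
/- Let f₁, f₂ ∈ ℂ[X₁,X₂] be polynomials with f₂ ≠ 0 such that every common divisor of f₁ and f₂ is a unit (f₁ and f₂ are relatively prime), and suppose the rational function f₁/f₂ is symmetric, i.e., f₁(X₂,X₁)·f₂(X₁,X₂) = f₁(X₁,X₂)·f₂(X₂,X₁). Then f₁(X₂,X₁) = f₁(X₁,X₂) and f₂(X₂,X₁) = f₂(X₁,X₂), i.e., both f₁ and f₂ are symmetric polynomials. -/
/-! Write `σ` for the swap of the variables. Since `f₁` and `f₂` are coprime and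
`σ f₁ * f₂ = f₁ * σ f₂`, the polynomials `f₁` and `σ f₁` divide each other, so
`σ f₁ = c f₁` for a constant `c`, and then `σ f₂ = c f₂` as well. Modulo `X₁ - X₂` the swap
acts trivially, so `X₁ - X₂` divides `(c - 1) f₁` and `(c - 1) f₂`; since it is not a unit,
coprimality forces `c = 1`. -/

theorem IsRelPrime.associated_of_mul_eq_mul {M : Type*} [CommMonoidWithZero M]
    [IsLeftCancelMulZero M] [DecompositionMonoid M] {a b a' b' : M} (h : IsRelPrime a b)
    (h' : IsRelPrime a' b') (heq : a' * b = a * b') : Associated a a' :=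
  associated_of_dvd_dvd (h.dvd_of_dvd_mul_right ⟨b', heq⟩)
    (h'.dvd_of_dvd_mul_right ⟨b, heq.symm⟩)

namespace MvPolynomial

variable {ι : Type*}

theorem not_isUnit_X_sub_X {R : Type*} [CommRing R] [Nontrivial R] (i j : ι) :
    ¬IsUnit (X i - X j : MvPolynomial ι R) :=
  fun h => by simpa using h.map (eval (0 : ι → R))

variable [DecidableEq ι]

theorem X_sub_X_dvd_rename_swap_sub {R : Type*} [CommRing R] (i j : ι) (p : MvPolynomial ι R) :
    X i - X j ∣ rename (Equiv.swap i j) p - p := by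
  set I := Ideal.span {(X i - X j : MvPolynomial ι R)}
  rw [← Ideal.mem_span_singleton, ← Ideal.Quotient.mk_eq_mk_iff_sub_mem]
  have hX : Ideal.Quotient.mk I (X i) = Ideal.Quotient.mk I (X j) :=
    (Ideal.Quotient.mk_eq_mk_iff_sub_mem _ _).2 (Ideal.mem_span_singleton_self _)
  have hcomp :
      (Ideal.Quotient.mkₐ R I).comp (rename (Equiv.swap i j)) = Ideal.Quotient.mkₐ R I := by
    ext k
    simp only [AlgHom.comp_apply, rename_X, Ideal.Quotient.mkₐ_eq_mk]
    rcases eq_or_ne k i with rfl | hki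
    · simp [hX]
    rcases eq_or_ne k j with rfl | hkj
    · simp [hX]
    rw [Equiv.swap_apply_of_ne_of_ne hki hkj]
  exact DFunLike.congr_fun hcomp p

variable {K : Type*} [Field K]

theorem X_sub_X_dvd_of_rename_swap_eq_mul_C {i j : ι} {p : MvPolynomial ι K} {r : K}
    (hr : r ≠ 1) (hp : rename (Equiv.swap i j) p = p * C r) : X i - X j ∣ p := by
  have hunit : IsUnit (C (r - 1) : MvPolynomial ι K) := (sub_ne_zero.2 hr).isUnit.map C
  rw [← hunit.dvd_mul_right, C_sub, C_1, mul_sub_one, ← hp]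
  exact X_sub_X_dvd_rename_swap_sub i j p

theorem rename_swap_eq_self_of_isRelPrime {i j : ι} {f g : MvPolynomial ι K}
    (hfg : IsRelPrime f g)
    (hsymm : rename (Equiv.swap i j) f * g = f * rename (Equiv.swap i j) g) :
    rename (Equiv.swap i j) f = f ∧ rename (Equiv.swap i j) g = g := by
  rcases eq_or_ne f 0 with rfl | hf
  · obtain ⟨r, -, rfl⟩ := isUnit_iff_eq_C_of_isReduced.1 (isRelPrime_zero_left.1 hfg)
    simp
  set σ := renameEquiv K (Equiv.swap i j)
  have hσ : IsRelPrime (σ f) (σ g) := IsRelPrime.of_map σ.symm (by simpa using hfg)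
  obtain ⟨u, hu⟩ := hfg.associated_of_mul_eq_mul hσ hsymm
  obtain ⟨r, -, hr⟩ := isUnit_iff_eq_C_of_isReduced.1 u.isUnit
  have hf' : rename (Equiv.swap i j) f = f * C r := by rw [← hr]; exact hu.symm
  have hg' : rename (Equiv.swap i j) g = g * C r :=
    mul_left_cancel₀ hf (by rw [← hsymm, hf']; ring)
  by_cases hr1 : r = 1
  · simp [hf', hg', hr1]
  exact absurd (hfg (X_sub_X_dvd_of_rename_swap_eq_mul_C hr1 hf')
    (X_sub_X_dvd_of_rename_swap_eq_mul_C hr1 hg')) (not_isUnit_X_sub_X i j)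

end MvPolynomial

open MvPolynomial

theorem statement3_general (f1 f2 : MvPolynomial (Fin 2) ℂ)
    (hcop : IsRelPrime f1 f2)
    (hsymm : rename (Equiv.swap (0 : Fin 2) 1) f1 * f2
      = f1 * rename (Equiv.swap (0 : Fin 2) 1) f2) :
    rename (Equiv.swap (0 : Fin 2) 1) f1 = f1 ∧
      rename (Equiv.swap (0 : Fin 2) 1) f2 = f2 :=
  rename_swap_eq_self_of_isRelPrime hcop hsymm

/-- If `f₁, f₂ ∈ ℂ[X₁,X₂]` are relatively prime, `f₂ ≠ 0`, and the rational function
`f₁/f₂` is symmetric (i.e. `f₁(X₂,X₁)·f₂(X₁,X₂) = f₁(X₁,X₂)·f₂(X₂,X₁)`), then both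
`f₁` and `f₂` are symmetric polynomials. -/
theorem statement3 (f1 f2 : MvPolynomial (Fin 2) ℂ) (hf2 : f2 ≠ 0)
    (hcop : IsRelPrime f1 f2)
    (hsymm : rename (Equiv.swap (0 : Fin 2) 1) f1 * f2
      = f1 * rename (Equiv.swap (0 : Fin 2) 1) f2) :
    rename (Equiv.swap (0 : Fin 2) 1) f1 = f1 ∧
      rename (Equiv.swap (0 : Fin 2) 1) f2 = f2 :=
  statement3_general f1 f2 hcop hsymm
end

section
/- Let R : ℂ³ → ℂ and f : ℂ³ → ℂ be twice continuously complex-differentiable (of class C² over ℂ). Write the coordinates of ℂ³ as (w₁,w₃,w₅), let ∂₁,∂₃,∂₅ denote the complex partial derivatives along the three coordinate directions, and set Rᵢ = ∂ᵢR. On the open set {w ∈ ℂ³ : R₃(w) ≠ 0} define, for a differentiable function g, the functions L₁,₃ g = ∂₁g − (R₁/R₃)·∂₃g and L₅,₃ g = ∂₅g − (R₅/R₃)·∂₃g. Then at every point w with R₃(w) ≠ 0 one has L₁,₃(L₅,₃ f)(w) = L₅,₃(L₁,₃ f)(w), i.e., the operators L₁,₃ and L₅,₃ commute. -/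
/- Context: ℂ³ is modelled as `Fin 3 → ℂ` with coordinates 0 ↦ w₁, 1 ↦ w₃, 2 ↦ w₅.
`pd3 i f x` is the complex partial derivative of `f` along the `i`-th coordinate
direction.  For a function `R` with `R₃ ≠ 0`, the operators are
`L₁,₃ g = ∂₁g − (R₁/R₃)·∂₃g` and `L₅,₃ g = ∂₅g − (R₅/R₃)·∂₃g`. -/

noncomputable section

/-- Complex partial derivative along the `i`-th coordinate direction. -/
def pd3 (i : Fin 3) (f : (Fin 3 → ℂ) → ℂ) (x : Fin 3 → ℂ) : ℂ :=
  fderiv ℂ f x (Pi.single i 1)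

/-- `L₁,₃ g = ∂₁g − (R₁/R₃)·∂₃g`. -/
def L13 (R g : (Fin 3 → ℂ) → ℂ) (x : Fin 3 → ℂ) : ℂ :=
  pd3 0 g x - pd3 0 R x / pd3 1 R x * pd3 1 g x

/-- `L₅,₃ g = ∂₅g − (R₅/R₃)·∂₃g`. -/
def L53 (R g : (Fin 3 → ℂ) → ℂ) (x : Fin 3 → ℂ) : ℂ :=
  pd3 2 g x - pd3 2 R x / pd3 1 R x * pd3 1 g x

/-! `L₁,₃` and `L₅,₃` are differentiation along the vector fields `Xᵢ = eᵢ − (Rᵢ/R₃) e₃`,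
which are tangent to the level sets of `R`. Their Lie bracket is again tangent to the level
sets, and it is a multiple of `e₃` because the `eᵢ`-components of the `Xᵢ` are constant.
As `R₃ ≠ 0`, the bracket vanishes, so the two operators commute on `C²` functions. -/

open VectorField Topology

section LieBracket

variable {𝕜 : Type*} [NontriviallyNormedField 𝕜] {E : Type*} [NormedAddCommGroup E]
  [NormedSpace 𝕜 E] {x : E}

lemma lieBracket_const_sub_smul {φ ψ : E → 𝕜} (a b v : E)
    (hφ : DifferentiableAt 𝕜 φ x) (hψ : DifferentiableAt 𝕜 ψ x) :
    lieBracket 𝕜 (fun y ↦ a - φ y • v) (fun y ↦ b - ψ y • v) x =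
      (fderiv 𝕜 φ x (b - ψ x • v) - fderiv 𝕜 ψ x (a - φ x • v)) • v := by
  simp only [lieBracket, fderiv_const_sub, fderiv_smul_const hφ, fderiv_smul_const hψ,
    neg_apply, ContinuousLinearMap.smulRight_apply, sub_smul]
  abel

lemma fderiv_apply_lieBracket_eq_zero_of_tangent {n : WithTop ℕ∞} {R : E → 𝕜} {V W : E → E}
    (hR : ContDiffAt 𝕜 n R x) (hn : minSmoothness 𝕜 2 ≤ n)
    (hV : DifferentiableAt 𝕜 V x) (hW : DifferentiableAt 𝕜 W x)
    (hVR : (fun y ↦ fderiv 𝕜 R y (V y)) =ᶠ[𝓝 x] 0)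
    (hWR : (fun y ↦ fderiv 𝕜 R y (W y)) =ᶠ[𝓝 x] 0) :
    fderiv 𝕜 R x (lieBracket 𝕜 V W x) = 0 := by
  rw [fderiv_apply_lieBracket hR hn hW hV, hVR.fderiv_eq, hWR.fderiv_eq]
  simp

end LieBracket

def tangentField (R : (Fin 3 → ℂ) → ℂ) (i : Fin 3) (x : Fin 3 → ℂ) : Fin 3 → ℂ :=
  Pi.single i 1 - (pd3 i R x / pd3 1 R x) • Pi.single 1 1

lemma L13_eq_fderiv_apply_tangentField (R g : (Fin 3 → ℂ) → ℂ) :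
    L13 R g = fun x ↦ fderiv ℂ g x (tangentField R 0 x) := by
  ext x
  simp [L13, tangentField, pd3]

lemma L53_eq_fderiv_apply_tangentField (R g : (Fin 3 → ℂ) → ℂ) :
    L53 R g = fun x ↦ fderiv ℂ g x (tangentField R 2 x) := by
  ext x
  simp [L53, tangentField, pd3]

section

variable {R : (Fin 3 → ℂ) → ℂ}

lemma fderiv_apply_tangentField_eq_zero {x : Fin 3 → ℂ} (hx : pd3 1 R x ≠ 0) (i : Fin 3) :
    fderiv ℂ R x (tangentField R i x) = 0 := by
  have hexpand : fderiv ℂ R x (tangentField R i x) =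
      pd3 i R x - pd3 i R x / pd3 1 R x * pd3 1 R x := by
    simp [tangentField, pd3]
  rw [hexpand, div_mul_cancel₀ _ hx, sub_self]

lemma differentiable_pd3 (hR : ContDiff ℂ 2 R) (i : Fin 3) : Differentiable ℂ (pd3 i R) :=
  ((hR.fderiv_right (by norm_num)).differentiable one_ne_zero).clm_apply
    (differentiable_const _)

lemma differentiableAt_pd3_div (hR : ContDiff ℂ 2 R) {x : Fin 3 → ℂ} (hx : pd3 1 R x ≠ 0)
    (i : Fin 3) : DifferentiableAt ℂ (fun y ↦ pd3 i R y / pd3 1 R y) x := by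
  simpa only [div_eq_mul_inv] using
    (differentiable_pd3 hR i x).fun_mul ((differentiable_pd3 hR 1 x).fun_inv hx)

lemma differentiableAt_tangentField (hR : ContDiff ℂ 2 R) {x : Fin 3 → ℂ} (hx : pd3 1 R x ≠ 0)
    (i : Fin 3) : DifferentiableAt ℂ (tangentField R i) x :=
  ((differentiableAt_pd3_div hR hx i).smul_const _).const_sub _

lemma lieBracket_tangentField_eq_zero (hR : ContDiff ℂ 2 R) {w : Fin 3 → ℂ}
    (hw : pd3 1 R w ≠ 0) (i j : Fin 3) :
    lieBracket ℂ (tangentField R i) (tangentField R j) w = 0 := by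
  have hnear : ∀ᶠ x in 𝓝 w, pd3 1 R x ≠ 0 :=
    (differentiable_pd3 hR 1).continuous.continuousAt.eventually_ne hw
  have htangent := fderiv_apply_lieBracket_eq_zero_of_tangent hR.contDiffAt (by simp)
    (differentiableAt_tangentField hR hw i) (differentiableAt_tangentField hR hw j)
    (hnear.mono fun x hx ↦ fderiv_apply_tangentField_eq_zero hx i)
    (hnear.mono fun x hx ↦ fderiv_apply_tangentField_eq_zero hx j)
  obtain ⟨c, hc⟩ : ∃ c : ℂ,
      lieBracket ℂ (tangentField R i) (tangentField R j) w = c • Pi.single 1 1 :=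
    ⟨_, lieBracket_const_sub_smul _ _ _ (differentiableAt_pd3_div hR hw i)
      (differentiableAt_pd3_div hR hw j)⟩
  rw [hc, map_smul, smul_eq_mul, mul_eq_zero,
    or_iff_left (show fderiv ℂ R w (Pi.single 1 1) ≠ 0 from hw)] at htangent
  rw [hc, htangent, zero_smul]

end

/-- For `R, f : ℂ³ → ℂ` of class C² over ℂ, the operators `L₁,₃` and `L₅,₃`
commute at every point where `R₃ ≠ 0`. -/
theorem statement13 (R f : (Fin 3 → ℂ) → ℂ)
    (hR : ContDiff ℂ 2 R) (hf : ContDiff ℂ 2 f) :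
    ∀ w : Fin 3 → ℂ, pd3 1 R w ≠ 0 →
      L13 R (L53 R f) w = L53 R (L13 R f) w := by
  intro w hw
  have hcomm := fderiv_apply_lieBracket hf.contDiffAt (by simp)
    (differentiableAt_tangentField hR hw 2) (differentiableAt_tangentField hR hw 0)
  rw [lieBracket_tangentField_eq_zero hR hw, map_zero, eq_comm, sub_eq_zero] at hcomm
  simpa only [L13_eq_fderiv_apply_tangentField, L53_eq_fderiv_apply_tangentField] using hcomm

end
end
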